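/- arXiv:math/0608091 — 2 statements merged into one kernel-verified Lean document; each statement's English description precedes it below -/
import Mathlib

section
/- If a ℤΓ-module M admits a permutation presentation, then H¹(Γ, M) is annihilated by exp(Γ). -/
/-!
The presentation `0 → F → F → M → 0` gives the exact sequence `H¹(F) → H¹(M) → H²(F)`, so it
suffices that `H¹(F) = 0` and that `exp Γ` kills `H²(F)` for a permutation module `F = ℤ[X]`.
By Shapiro's lemma `Hⁱ(Γ, ℤ[X])` is the sum of the `Hⁱ(Γ_z, ℤ)` over orbit representatives `z`;
here `H¹(Γ_z, ℤ) = Hom(Γ_z, ℤ) = 0`, and a 2-cocycle `β` of a finite group `S` satisfies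
`|S| • β = dσ` with `σ s = ∑ t, β s t`, so `σ` is a homomorphism modulo `|S|` and
`exp • β = d(exp • σ / |S|)`. Shapiro's lemma is made explicit on cocycles, through a choice of
a representative of each orbit and of an element carrying it to each point of the orbit.
-/

open CategoryTheory CategoryTheory.Limits groupCohomology

/-- A permutation `ℤΓ`-module: one isomorphic to `ℤ[X]` for some `Γ`-set `X`. -/
def IsPermutationModule {Γ : Type} [Group Γ] (F : Rep ℤ Γ) : Prop :=
  ∃ (X : Type) (_ : MulAction Γ X), Nonempty (F ≅ Rep.ofMulAction ℤ Γ X)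

/-- A permutation projective module: a direct summand of a permutation module. -/
def IsPermutationProjective {Γ : Type} [Group Γ] (M : Rep ℤ Γ) : Prop :=
  ∃ F : Rep ℤ Γ, IsPermutationModule F ∧ ∃ (i : M ⟶ F) (r : F ⟶ M), i ≫ r = 𝟙 M

/-- A coflasque module: `ℤ`-free with vanishing `H¹(Γ', M)` for all subgroups `Γ' ≤ Γ`. -/
def IsCoflasque {Γ : Type} [Group Γ] (M : Rep ℤ Γ) : Prop :=
  (@Module.Free ℤ M.V _ _ M.hV2) ∧
    ∀ Γ' : Subgroup Γ,
      Subsingleton (H1 (Rep.res Γ'.subtype M))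

/-- A permutation presentation of `M`: an exact sequence `0 → F → F → M → 0`
with `F` a permutation module. -/
def HasPermutationPresentation {Γ : Type} [Group Γ] (M : Rep ℤ Γ) : Prop :=
  ∃ (F : Rep ℤ Γ) (_ : IsPermutationModule F) (f : F ⟶ F) (π : F ⟶ M),
    Function.Injective f.hom ∧ Function.Surjective π.hom ∧ Function.Exact f.hom π.hom

/-- `π` is `H⁰`-surjective if it is surjective on `Γ'`-invariants for every subgroup `Γ'`. -/
def IsH0Surjective {Γ : Type} [Group Γ] {M N : Rep ℤ Γ} (π : M ⟶ N) : Prop :=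
  ∀ Γ' : Subgroup Γ, ∀ n : N, (∀ γ : Γ', N.ρ ↑γ n = n) →
    ∃ m : M, (∀ γ : Γ', M.ρ ↑γ m = m) ∧ π.hom m = n

section OrbitRepresentatives

variable {Γ X : Type*} [Group Γ] [MulAction Γ X]

variable (Γ) in
noncomputable def orbitRep (x : X) : X := (Quotient.mk (MulAction.orbitRel Γ X) x).out

lemma orbitRep_smul (g : Γ) (x : X) : orbitRep Γ (g • x) = orbitRep Γ x :=
  congrArg Quotient.out (Quotient.sound ⟨g, rfl⟩)

lemma exists_smul_orbitRep_eq (x : X) : ∃ g : Γ, g • orbitRep Γ x = x := by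
  obtain ⟨g, hg⟩ := Quotient.mk_out (s := MulAction.orbitRel Γ X) x
  exact ⟨g⁻¹, by rw [orbitRep, ← hg, inv_smul_smul]⟩

variable (Γ) in
noncomputable def cosetRep (x : X) : Γ := (exists_smul_orbitRep_eq x).choose

lemma cosetRep_smul_orbitRep (x : X) : cosetRep Γ x • orbitRep Γ x = x :=
  (exists_smul_orbitRep_eq x).choose_spec

lemma inv_cosetRep_smul (x : X) : (cosetRep Γ x)⁻¹ • x = orbitRep Γ x := by
  rw [inv_smul_eq_iff, cosetRep_smul_orbitRep]

noncomputable def stabTwist (g : Γ) (x : X) : Γ := (cosetRep Γ x)⁻¹ * g * cosetRep Γ (g⁻¹ • x)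

lemma cosetRep_mul_stabTwist (g : Γ) (x : X) :
    cosetRep Γ x * stabTwist g x = g * cosetRep Γ (g⁻¹ • x) := by
  simp [stabTwist, mul_assoc]

lemma stabTwist_mul (g h : Γ) (x : X) :
    stabTwist (g * h) x = stabTwist g x * stabTwist h (g⁻¹ • x) := by
  simp [stabTwist, mul_assoc, mul_smul]

lemma stabTwist_smul_orbitRep (g : Γ) (x : X) :
    stabTwist g x • orbitRep Γ x = orbitRep Γ x := by
  rw [stabTwist, mul_smul, mul_smul, ← orbitRep_smul g⁻¹ x, cosetRep_smul_orbitRep,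
    smul_inv_smul, inv_cosetRep_smul, orbitRep_smul]

end OrbitRepresentatives

section TrivialCoefficients

variable {S : Type*} [Group S] [Fintype S]

lemma card_smul_twoCocycle_eq {A : Type*} [AddCommGroup A] {β : S → S → A}
    (hβ : ∀ g h j, β h j - β (g * h) j + β g (h * j) - β g h = 0) (s t : S) :
    Fintype.card S • β s t = ∑ j, β t j - ∑ j, β (s * t) j + ∑ j, β s j := by
  have h : ∑ j, (β t j - β (s * t) j + β s (t * j) - β s t) = 0 :=
    Finset.sum_eq_zero fun j _ => hβ s t j
  have hshift : ∑ j, β s (t * j) = ∑ j, β s j :=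
    Fintype.sum_equiv (Equiv.mulLeft t) _ _ fun _ => rfl
  rw [Finset.sum_sub_distrib, Finset.sum_add_distrib, Finset.sum_sub_distrib, Finset.sum_const,
    Finset.card_univ, hshift] at h
  exact (sub_eq_zero.1 h).symm

variable {β : S → S → ℤ} (hβ : ∀ g h j, β h j - β (g * h) j + β g (h * j) - β g h = 0)
  {n : ℕ} (hn : ∀ s : S, s ^ n = 1)
include hβ hn

lemma card_dvd_mul_sum_twoCocycle (s : S) : (Fintype.card S : ℤ) ∣ n * ∑ j, β s j := by
  have hcard := fun a b => (nsmul_eq_mul _ _).symm.trans (card_smul_twoCocycle_eq hβ a b)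
  have hone : (Fintype.card S : ℤ) * β 1 1 = ∑ j, β 1 j := by simpa using hcard 1 1
  have hpow : ∀ k : ℕ, (Fintype.card S : ℤ) ∣ ∑ j, β (s ^ k) j - k * ∑ j, β s j := by
    intro k
    induction k with
    | zero => exact ⟨β 1 1, by simpa using hone.symm⟩
    | succ k ih =>
      obtain ⟨c, hc⟩ := ih
      refine ⟨c - β s (s ^ k), ?_⟩
      rw [pow_succ']
      push_cast
      linear_combination hc + hcard s (s ^ k)
  obtain ⟨c, hc⟩ := hpow n
  rw [hn] at hc
  exact ⟨β 1 1 - c, by linear_combination -hc - hone⟩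

-- The integer divisions are exact, by `card_dvd_mul_sum_twoCocycle`.
lemma mul_twoCocycle_eq_coboundary (s t : S) :
    n * β s t = n * (∑ j, β t j) / Fintype.card S - n * (∑ j, β (s * t) j) / Fintype.card S
      + n * (∑ j, β s j) / Fintype.card S := by
  have hcard := (nsmul_eq_mul _ _).symm.trans (card_smul_twoCocycle_eq hβ s t)
  have hdiv := fun s => Int.mul_ediv_cancel' (card_dvd_mul_sum_twoCocycle hβ hn s)
  refine mul_left_cancel₀ (Nat.cast_ne_zero.2 Fintype.card_ne_zero : (Fintype.card S : ℤ) ≠ 0) ?_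
  linear_combination n * hcard - hdiv t + hdiv (s * t) - hdiv s

end TrivialCoefficients

section FunCocycles

-- Cochains of `Γ` with values in the module of all functions `X → A`, on which `Γ` acts by
-- `(g • a) x = a (g⁻¹ • x)`; the permutation module `ℤ[X]` is its submodule of finitely
-- supported functions.

variable {Γ X A : Type*} [Group Γ] [MulAction Γ X] [AddCommGroup A]

def IsFunCocycle₁ (W : Γ → X → A) : Prop :=
  ∀ g h x, W (g * h) x = W h (g⁻¹ • x) + W g x

def IsFunCocycle₂ (b : Γ → Γ → X → A) : Prop :=
  ∀ g h j x, b h j (g⁻¹ • x) - b (g * h) j x + b g (h * j) x - b g h x = 0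

namespace IsFunCocycle₁

variable {W : Γ → X → A} (hW : IsFunCocycle₁ W)
include hW

lemma apply_one (x : X) : W 1 x = 0 := by
  simpa using hW 1 1 x

lemma apply_pow_of_smul_eq {s : Γ} {y : X} (hs : s • y = y) (k : ℕ) :
    W (s ^ k) y = k • W s y := by
  induction k with
  | zero => simpa using hW.apply_one y
  | succ k ih => rw [pow_succ', hW, inv_smul_eq_iff.2 hs.symm, ih, succ_nsmul]

lemma apply_eq_zero_of_smul_eq [IsAddTorsionFree A] {n : ℕ} (hn : n ≠ 0)
    (hpow : ∀ g : Γ, g ^ n = 1) {s : Γ} {y : X} (hs : s • y = y) : W s y = 0 := by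
  have h := hW.apply_pow_of_smul_eq hs n
  rw [hpow, hW.apply_one, eq_comm] at h
  exact (nsmul_eq_zero_iff_right hn).1 h

/-- Shapiro's lemma in degree one. -/
lemma eq_coboundary_of_forall_smul_eq (hstab : ∀ s y, s • y = y → W s y = 0) (g : Γ) (x : X) :
    W g x = -W (cosetRep Γ (g⁻¹ • x)) (g⁻¹ • x) - -W (cosetRep Γ x) x := by
  have h := hW (cosetRep Γ x) (stabTwist g x) x
  rw [cosetRep_mul_stabTwist, inv_cosetRep_smul, hstab _ _ (stabTwist_smul_orbitRep g x),
    zero_add, hW] at h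
  rw [← h]
  abel

theorem exists_eq_coboundary [Finite Γ] [IsAddTorsionFree A] :
    ∃ a : X → A, (∀ x, a x ≠ 0 → ∃ g, W g x ≠ 0) ∧ ∀ g x, W g x = a (g⁻¹ • x) - a x := by
  have hstab := fun s y (hs : s • y = y) => hW.apply_eq_zero_of_smul_eq
    Monoid.exponent_ne_zero_of_finite Monoid.pow_exponent_eq_one hs
  refine ⟨fun x => -W (cosetRep Γ x) x, fun x hx => ⟨cosetRep Γ x, neg_ne_zero.1 hx⟩,
    hW.eq_coboundary_of_forall_smul_eq hstab⟩

end IsFunCocycle₁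

noncomputable def shapiroPrimitive (c : Γ → Γ → X → A) (w : X → Γ → A) (g : Γ) (x : X) : A :=
  w (orbitRep Γ x) (stabTwist g x)
    - (c (cosetRep Γ x) (stabTwist g x) x - c g (cosetRep Γ (g⁻¹ • x)) x)

namespace IsFunCocycle₂

variable {c : Γ → Γ → X → A} (hc : IsFunCocycle₂ c)
include hc

lemma nsmul (n : ℕ) : IsFunCocycle₂ (n • c) := by
  intro g h j x
  simp only [Pi.smul_apply, ← smul_sub, ← smul_add, hc g h j x, smul_zero]

/-- Shapiro's lemma in degree two. -/
lemma eq_coboundary_shapiroPrimitive {w : X → Γ → A}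
    (hw : ∀ z s t, s • z = z → t • z = z → c s t z = w z t - w z (s * t) + w z s)
    (g h : Γ) (x : X) :
    c g h x = shapiroPrimitive c w h (g⁻¹ • x) - shapiroPrimitive c w (g * h) x
      + shapiroPrimitive c w g x := by
  have hyx : orbitRep Γ (g⁻¹ • x) = orbitRep Γ x := orbitRep_smul _ _
  have hs := stabTwist_smul_orbitRep g x
  have ht := hyx ▸ stabTwist_smul_orbitRep h (g⁻¹ • x)
  have hx : (g * h)⁻¹ • x = h⁻¹ • g⁻¹ • x := by rw [mul_inv_rev, mul_smul]
  have I1 := hc (cosetRep Γ x) (stabTwist g x) (stabTwist h (g⁻¹ • x)) x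
  rw [inv_cosetRep_smul, cosetRep_mul_stabTwist] at I1
  have I2 := hc g (cosetRep Γ (g⁻¹ • x)) (stabTwist h (g⁻¹ • x)) x
  rw [cosetRep_mul_stabTwist] at I2
  have I3 := hc g h (cosetRep Γ (h⁻¹ • g⁻¹ • x)) x
  simp only [shapiroPrimitive, stabTwist_mul, hx, hyx]
  linear_combination (norm := module) hw _ _ _ hs ht - I1 + I2 - I3

end IsFunCocycle₂

theorem IsFunCocycle₂.exists_exponent_smul_eq_coboundary [Finite Γ] {b : Γ → Γ → X → ℤ}
    (hb : IsFunCocycle₂ b) :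
    ∃ u : Γ → X → ℤ, (∀ g x, u g x ≠ 0 → ∃ p r, ∃ h : Γ, b p r (h • x) ≠ 0) ∧
      ∀ g h x, Monoid.exponent Γ • b g h x = u h (g⁻¹ • x) - u (g * h) x + u g x := by
  classical
  have := Fintype.ofFinite Γ
  set n := Monoid.exponent Γ
  let w : X → Γ → ℤ := fun z s => n * (∑ j : MulAction.stabilizer Γ z, b s j z) /
    Fintype.card (MulAction.stabilizer Γ z)
  have hw : ∀ z s t, s • z = z → t • z = z → (n • b) s t z = w z t - w z (s * t) + w z s := by
    intro z s t hs ht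
    have hβ : ∀ g h j : MulAction.stabilizer Γ z,
        b h j z - b (g * h) j z + b g (h * j) z - b g h z = 0 := fun g h j => by
      simpa [inv_smul_eq_iff.2 g.2.symm] using hb g h j z
    have hn : ∀ s : MulAction.stabilizer Γ z, s ^ n = 1 := fun s => by
      ext; simp [n, Monoid.pow_exponent_eq_one]
    simpa [w] using mul_twoCocycle_eq_coboundary hβ hn ⟨s, hs⟩ ⟨t, ht⟩
  refine ⟨shapiroPrimitive (n • b) w, fun g x hx => ?_,
    (hb.nsmul n).eq_coboundary_shapiroPrimitive hw⟩
  by_contra! hzero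
  have hx0 : ∀ p r, b p r x = 0 := fun p r => by simpa using hzero p r 1
  apply hx
  simp [shapiroPrimitive, w, ← inv_cosetRep_smul, hzero, hx0]

end FunCocycles

section PermutationModule

variable {Γ X : Type} [Group Γ] [MulAction Γ X]

lemma finite_setOf_exists_smul_ne_zero [Finite Γ] {ι M : Type*} [Finite ι] [Zero M]
    (f : ι → X →₀ M) : {x : X | ∃ i, ∃ g : Γ, f i (g • x) ≠ 0}.Finite := by
  refine (Set.finite_iUnion fun i => Set.finite_iUnion fun g : Γ =>
    (f i).support.finite_toSet.preimage (MulAction.injective g).injOn).subset ?_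
  rintro x ⟨i, g, hx⟩
  simp only [Set.mem_iUnion, Set.mem_preimage, Finset.mem_coe, Finsupp.mem_support_iff]
  exact ⟨i, g, hx⟩

lemma isFunCocycle₁_coeff (c : cocycles₁ (Rep.ofMulAction ℤ Γ X)) :
    IsFunCocycle₁ fun g x => (c g).coeff x := by
  intro g h x
  dsimp only
  rw [(mem_cocycles₁_iff c).1 c.2 g h]
  simp [MonoidAlgebra.coeff_add]

lemma isFunCocycle₂_coeff (c : cocycles₂ (Rep.ofMulAction ℤ Γ X)) :
    IsFunCocycle₂ fun g h x => (c (g, h)).coeff x := by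
  intro g h j x
  simpa using congrArg (fun a => a.coeff x) ((mem_cocycles₂_def _).1 c.2 g h j)

variable [Finite Γ]

theorem subsingleton_H1_ofMulAction : Subsingleton (H1 (Rep.ofMulAction ℤ Γ X)) := by
  refine subsingleton_of_forall_eq 0 fun y => H1_induction_on y fun c => ?_
  rw [H1π_eq_zero_iff]
  obtain ⟨a, ha_supp, ha⟩ := (isFunCocycle₁_coeff c).exists_eq_coboundary
  have hfin : (Function.support a).Finite :=
    (finite_setOf_exists_smul_ne_zero (Γ := Γ) fun g => (c g).coeff).subset fun x hx => by
      obtain ⟨g, hg⟩ := ha_supp x hx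
      exact ⟨g, 1, by simpa using hg⟩
  refine ⟨MonoidAlgebra.ofCoeff (Finsupp.ofSupportFinite a hfin), funext fun g => ?_⟩
  ext x
  rw [d₀₁_hom_apply]
  simp [MonoidAlgebra.coeff_sub, Finsupp.ofSupportFinite_coe, ha g x]

theorem exponent_smul_H2_ofMulAction (y : H2 (Rep.ofMulAction ℤ Γ X)) :
    Monoid.exponent Γ • y = 0 := by
  induction y using H2_induction_on with | h c => ?_
  rw [← map_nsmul, H2π_eq_zero_iff]
  obtain ⟨u, hu_supp, hu⟩ := (isFunCocycle₂_coeff c).exists_exponent_smul_eq_coboundary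
  have hfin : ∀ g, (Function.support (u g)).Finite := fun g =>
    (finite_setOf_exists_smul_ne_zero (Γ := Γ) fun i : Γ × Γ => (c i).coeff).subset
      fun x hx => by
        obtain ⟨p, r, h, hpr⟩ := hu_supp g x hx
        exact ⟨(p, r), h, hpr⟩
  refine ⟨fun g => MonoidAlgebra.ofCoeff (Finsupp.ofSupportFinite _ (hfin g)),
    funext fun gh => ?_⟩
  ext x
  rw [d₁₂_hom_apply]
  simp only [MonoidAlgebra.coeff_sub, MonoidAlgebra.coeff_add, Finsupp.coe_add, Finsupp.coe_sub,
    Pi.add_apply, Pi.sub_apply, Representation.coeff_ofMulAction, Finsupp.ofSupportFinite_coe]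
  exact (hu _ _ x).symm

end PermutationModule

namespace IsPermutationModule

variable {Γ : Type} [Group Γ] [Finite Γ] {F : Rep ℤ Γ} (hF : IsPermutationModule F)
include hF

theorem subsingleton_H1 : Subsingleton (H1 F) := by
  obtain ⟨X, _, ⟨e⟩⟩ := hF
  have := subsingleton_H1_ofMulAction (Γ := Γ) (X := X)
  let E : H1 F ≅ H1 (Rep.ofMulAction ℤ Γ X) := (functor ℤ Γ 1).mapIso e
  exact E.toLinearEquiv.toEquiv.subsingleton

theorem exponent_smul_H2 (y : H2 F) : Monoid.exponent Γ • y = 0 := by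
  obtain ⟨X, _, ⟨e⟩⟩ := hF
  let E : H2 F ≅ H2 (Rep.ofMulAction ℤ Γ X) := (functor ℤ Γ 2).mapIso e
  apply E.toLinearEquiv.injective
  rw [map_nsmul, map_zero]
  exact exponent_smul_H2_ofMulAction _

end IsPermutationModule

theorem Rep.shortExact_mk_of_exact {k Γ : Type*} [CommRing k] [Group Γ] {A B C : Rep k Γ}
    (f : A ⟶ B) (g : B ⟶ C) (hf : Function.Injective f.hom) (hg : Function.Surjective g.hom)
    (hfg : Function.Exact f.hom g.hom) :
    (ShortComplex.mk f g (by ext x; exact hfg.apply_apply_eq_zero x)).ShortExact where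
  exact := (forget₂ (Rep k Γ) (ModuleCat k)).reflects_exact_of_faithful _ <|
    (ShortComplex.moduleCat_exact_iff _).2 fun x hx => (hfg x).1 hx
  mono_f := (Rep.mono_iff_injective f).2 hf
  epi_g := (Rep.epi_iff_surjective g).2 hg

theorem exponent_smul_h1_of_hasPermutationPresentation (Γ : Type) [Group Γ] [Finite Γ]
    (M : Rep ℤ Γ) (hM : HasPermutationPresentation M) (x : H1 M) :
    Monoid.exponent Γ • x = 0 := by
  obtain ⟨F, hF, f, π, hf, hπ, hfπ⟩ := hM
  have hS := Rep.shortExact_mk_of_exact f π hf hπ hfπ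
  have := hF.subsingleton_H1
  have hδ : Function.Injective (δ hS 1 2 rfl) :=
    (ModuleCat.mono_iff_injective _).1 (mono_δ_of_isZero hS 1 (ModuleCat.isZero_of_subsingleton _))
  apply hδ
  rw [map_nsmul, map_zero]
  exact hF.exponent_smul_H2 _
end

section
/- A ℤΓ-module M is permutation projective if and only if M is permutation projective as a ℤΓ'-module for every Sylow subgroup Γ' of Γ. -/
open CategoryTheory CategoryTheory.Limits groupCohomology

/-!
A surjection `π : E → M` of `ℤΓ`-modules which splits over a subgroup `H` of finite index splits
up to the factor `[Γ : H]` over `Γ`: average a section over `H` along coset representatives. The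
indices of the Sylow subgroups have no common prime factor, so an integral combination of these
transferred sections splits `π`. Apply this to `ℤ[M] → M`, `[m] ↦ m`: a module is permutation
projective exactly when this map splits, because any map from a permutation module to `M` lifts
through it.
-/

universe u

namespace Representation

variable {k G V : Type*} [CommRing k] [Group G] [AddCommGroup V] [Module k V]
  (ρ : Representation k G V)

lemma apply_eq_of_coset_eq {H : Subgroup G} {v : V} (hv : ∀ h ∈ H, ρ h v = v) {a b : G}
    (hab : (a : G ⧸ H) = b) : ρ a v = ρ b v := by
  obtain ⟨h, hh, rfl⟩ : ∃ h ∈ H, b = a * h := ⟨a⁻¹ * b, QuotientGroup.eq.1 hab, by group⟩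
  rw [map_mul, Module.End.mul_apply, hv h hh]

/-- Depends on the chosen coset representatives, except on `H`-invariant vectors. -/
noncomputable def relNorm (H : Subgroup G) [Fintype (G ⧸ H)] : V →ₗ[k] V :=
  ∑ q : G ⧸ H, ρ q.out

lemma relNorm_mem_invariants (H : Subgroup G) [Fintype (G ⧸ H)] {v : V}
    (hv : ∀ h ∈ H, ρ h v = v) : ρ.relNorm H v ∈ ρ.invariants := by
  intro g
  simp only [relNorm, LinearMap.sum_apply, map_sum, ← Module.End.mul_apply, ← map_mul]
  refine Fintype.sum_equiv (MulAction.toPerm g) _ _ fun q => ρ.apply_eq_of_coset_eq hv ?_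
  rw [QuotientGroup.out_eq', MulAction.toPerm_apply]
  exact congrArg (g • ·) (QuotientGroup.out_eq' q)

end Representation

theorem Sylow.span_index_eq_top (G : Type*) [Group G] [Finite G] :
    Ideal.span {n : ℤ | ∃ p, p.Prime ∧ ∃ P : Sylow p G, n = P.index} = ⊤ := by
  obtain ⟨n, hn⟩ := Submodule.IsPrincipal.principal
    (Ideal.span {n : ℤ | ∃ p, p.Prime ∧ ∃ P : Sylow p G, n = P.index})
  rw [hn, Ideal.submodule_span_eq, Ideal.span_singleton_eq_top, Int.isUnit_iff_natAbs_eq]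
  by_contra hn1
  obtain ⟨p, hp, hpn⟩ := Nat.exists_prime_and_dvd hn1
  have := Fact.mk hp
  let P : Sylow p G := default
  have hnP : n ∣ P.index := by
    rw [← Ideal.mem_span_singleton, ← Ideal.submodule_span_eq, ← hn]
    exact Ideal.subset_span ⟨p, hp, P, rfl⟩
  exact P.not_dvd_index (hpn.trans (Int.natAbs_dvd_natAbs.2 hnP))

namespace Rep

variable {k : Type u} {G : Type*} [CommRing k] [Group G]

theorem exists_comp_eq_index_smul_id {E M : Rep k G} (π : E ⟶ M) (H : Subgroup G)
    [H.FiniteIndex] (s : res H.subtype M ⟶ res H.subtype E)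
    (hs : s ≫ (resFunctor H.subtype).map π = 𝟙 _) :
    ∃ t : M ⟶ E, t ≫ π = H.index • 𝟙 M := by
  have := Fintype.ofFinite (G ⧸ H)
  have hsH : ∀ h ∈ H, Representation.linHom M.ρ E.ρ h s.hom.toLinearMap = s.hom.toLinearMap :=
    fun h hh => (Representation.linHom.mem_invariants_iff_comm _ (⟨h, hh⟩ : H)).2 (s.hom.2 _)
  refine ⟨Representation.linHom.invariantsEquivRepHom M E
    ⟨_, (Representation.linHom M.ρ E.ρ).relNorm_mem_invariants H hsH⟩, ?_⟩
  have hπs : ∀ m, π.hom (s.hom m) = m := fun m => congr($(hs).hom m)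
  ext m
  calc π.hom ((Representation.linHom M.ρ E.ρ).relNorm H s.hom.toLinearMap m)
      = ∑ _q : G ⧸ H, m := by
        simp only [Representation.relNorm, LinearMap.sum_apply, Representation.linHom_apply,
          LinearMap.comp_apply, map_sum, hom_comm_apply,
          Representation.IntertwiningMap.toLinearMap_apply, hπs, Representation.self_inv_apply]
    _ = H.index • m := by
        rw [Finset.sum_const, Finset.card_univ, H.index_eq_card, Nat.card_eq_fintype_card]

theorem exists_comp_eq_id_of_forall_sylow [Finite G] {E M : Rep k G} (π : E ⟶ M)
    (h : ∀ p, p.Prime → ∀ P : Sylow p G, ∃ s : res (P : Subgroup G).subtype M ⟶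
      res (P : Subgroup G).subtype E, s ≫ (resFunctor _).map π = 𝟙 _) :
    ∃ t : M ⟶ E, t ≫ π = 𝟙 M := by
  -- the integers `n` for which `n • 𝟙 M` factors through `π`
  let J : AddSubgroup ℤ := (Preadditive.rightComp M π).range.comap (zmultiplesHom _ (𝟙 M))
  have hJ : Ideal.span {n : ℤ | ∃ p, p.Prime ∧ ∃ P : Sylow p G, n = P.index} ≤
      AddSubgroup.toIntSubmodule J := by
    rw [Ideal.span_le]
    rintro _ ⟨p, hp, P, rfl⟩
    obtain ⟨s, hs⟩ := h p hp P
    obtain ⟨t, ht⟩ := exists_comp_eq_index_smul_id π P s hs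
    exact ⟨t, ht.trans (natCast_zsmul _ _).symm⟩
  obtain ⟨t, ht⟩ := hJ (Sylow.span_index_eq_top G ▸ Submodule.mem_top : (1 : ℤ) ∈ _)
  exact ⟨t, ht.trans (one_zsmul _)⟩

abbrev carrierMulAction (M : Rep.{u} k G) : MulAction G M := MulAction.compHom M.V M.ρ

attribute [local instance] carrierMulAction

lemma carrier_smul_eq (M : Rep.{u} k G) (g : G) (m : M) : g • m = M.ρ g m := rfl

noncomputable abbrev permCover (M : Rep.{u} k G) : Rep.{u} k G := ofMulAction k G M

/-- The map `k[M] → M`, `[m] ↦ m`. -/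
noncomputable def permCoverπ (M : Rep.{u} k G) : permCover M ⟶ M :=
  ofHom ⟨(MonoidAlgebra.basis M k).constr k id, fun g => (MonoidAlgebra.basis M k).ext fun m => by
    rw [LinearMap.comp_apply, LinearMap.comp_apply, MonoidAlgebra.basis_apply,
      Representation.ofMulAction_single, ← MonoidAlgebra.basis_apply, ← MonoidAlgebra.basis_apply,
      Module.Basis.constr_basis, Module.Basis.constr_basis]
    rfl⟩

lemma permCoverπ_hom_single (M : Rep.{u} k G) (m : M) :
    (permCoverπ M).hom (MonoidAlgebra.single m 1) = m :=
  (MonoidAlgebra.basis M k).constr_basis k id m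

lemma exists_comp_permCoverπ_eq {X : Type u} [MulAction G X] {M : Rep.{u} k G}
    (f : ofMulAction k G X ⟶ M) :
    ∃ ℓ : ofMulAction k G X ⟶ permCover M, ℓ ≫ permCoverπ M = f := by
  let φ : X → M := fun x => f.hom (MonoidAlgebra.single x 1)
  have hφ : ∀ (g : G) (x : X), φ (g • x) = M.ρ g (φ x) := fun g x => by
    simpa only [Representation.ofMulAction_single, φ] using hom_comm_apply f g (.single x 1)
  refine ⟨ofHom ⟨MonoidAlgebra.mapDomainLinearMap k k φ, fun g =>
    (MonoidAlgebra.basis X k).ext fun x => ?_⟩, ?_⟩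
  · simp only [MonoidAlgebra.basis_apply, LinearMap.coe_comp, Function.comp_apply,
      Representation.ofMulAction_single, MonoidAlgebra.mapDomainLinearMap_single, hφ,
      carrier_smul_eq]
  · ext : 2
    refine (MonoidAlgebra.basis X k).ext fun x => ?_
    show (permCoverπ M).hom (MonoidAlgebra.mapDomainLinearMap k k φ (.single x 1)) = φ x
    rw [MonoidAlgebra.mapDomainLinearMap_single, permCoverπ_hom_single]

end Rep

theorem isPermutationProjective_iff_exists_comp_permCoverπ_eq_id {Γ : Type} [Group Γ]
    (M : Rep ℤ Γ) : IsPermutationProjective M ↔ ∃ s : M ⟶ M.permCover, s ≫ M.permCoverπ = 𝟙 M := by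
  constructor
  · rintro ⟨F, ⟨X, _, ⟨e⟩⟩, i, r, hir⟩
    obtain ⟨ℓ, hℓ⟩ := Rep.exists_comp_permCoverπ_eq (e.inv ≫ r)
    exact ⟨i ≫ e.hom ≫ ℓ, by simp only [Category.assoc, hℓ, Iso.hom_inv_id_assoc, hir]⟩
  · rintro ⟨s, hs⟩
    exact ⟨M.permCover, ⟨M, _, ⟨Iso.refl _⟩⟩, s, _, hs⟩

theorem isPermutationProjective_iff_sylow (Γ : Type) [Group Γ] [Finite Γ]
    (M : Rep ℤ Γ) :
    IsPermutationProjective M ↔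
      ∀ (p : ℕ), p.Prime → ∀ P : Sylow p Γ,
        IsPermutationProjective
          (Rep.res (P : Subgroup Γ).subtype M) := by
  simp only [isPermutationProjective_iff_exists_comp_permCoverπ_eq_id]
  refine ⟨fun ⟨s, hs⟩ p _ P => ⟨(Rep.resFunctor _).map s, ?_⟩,
    fun h => Rep.exists_comp_eq_id_of_forall_sylow M.permCoverπ h⟩
  rw [← (Rep.resFunctor _).map_id]
  exact ((Rep.resFunctor _).map_comp s M.permCoverπ).symm.trans (congrArg _ hs)
end
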